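/- Let f₁ = φ(·; μ₁, Σ₁) and f₂ = φ(·; μ₂, Σ₂) be bivariate normal densities. Define S_α = (1 − α) Σ₁⁻¹ + α Σ₂⁻¹, p(α) = (μ₂ − μ₁)ᵀ Σ₁⁻¹ S_α⁻¹ Σ₂⁻¹ S_α⁻¹ Σ₂⁻¹ S_α⁻¹ Σ₁⁻¹ (μ₂ − μ₁), and q(α) = 1 − α(1 − α) p(α). Suppose the set {α ∈ [0, 1] : q(α) = 0} is finite with exactly n elements. Then for every c ∈ [0, 1], the set of modes (local maximum points) of the mixture density M_c = c f₁ + (1 − c) f₂ has at most n/2 + 1 elements. -/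

import Mathlib

open Matrix

noncomputable section

/-- A diffeomorphism of the plane: a smooth bijection with smooth inverse. -/
def IsDiffeo (Φ : ℝ × ℝ → ℝ × ℝ) : Prop :=
  ∃ e : (ℝ × ℝ) ≃ (ℝ × ℝ), ⇑e = Φ ∧ ContDiff ℝ (⊤ : ℕ∞) ⇑e ∧ ContDiff ℝ (⊤ : ℕ∞) ⇑e.symm

/-- `F` and `G` are A-equivalent: `Ψ ∘ F ∘ Φ = G` for diffeomorphisms `Φ, Ψ` of the plane. -/
def AEquiv (F G : ℝ × ℝ → ℝ × ℝ) : Prop :=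
  ∃ Φ Ψ : ℝ × ℝ → ℝ × ℝ, IsDiffeo Φ ∧ IsDiffeo Ψ ∧ Ψ ∘ F ∘ Φ = G

/-- Generalized distance-squared mapping `G(p₁, p₂, A)`. -/
def Gmap (p₁ p₂ : ℝ × ℝ) (A : Matrix (Fin 2) (Fin 2) ℝ) : ℝ × ℝ → ℝ × ℝ :=
  fun z => (A 0 0 * (z.1 - p₁.1) ^ 2 + A 0 1 * (z.2 - p₁.2) ^ 2,
            A 1 0 * (z.1 - p₂.1) ^ 2 + A 1 1 * (z.2 - p₂.2) ^ 2)

/-- Singular set `S(F)`: points where the Jacobian determinant of `F` vanishes. -/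
def singularSet (F : ℝ × ℝ → ℝ × ℝ) : Set (ℝ × ℝ) :=
  {z | LinearMap.det (fderiv ℝ F z).toLinearMap = 0}

/-- Bivariate normal density `φ(·; μ, S)` on the plane. -/
def gauss (μ : Fin 2 → ℝ) (S : Matrix (Fin 2) (Fin 2) ℝ) (z : ℝ × ℝ) : ℝ :=
  (2 * Real.pi * Real.sqrt S.det)⁻¹ *
    Real.exp (-(1 / 2) * dotProduct ![z.1 - μ 0, z.2 - μ 1] (S⁻¹ *ᵥ ![z.1 - μ 0, z.2 - μ 1]))

/-- Mixture density `M_c = c f₁ + (1 - c) f₂`. -/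
def mix (f₁ f₂ : ℝ × ℝ → ℝ) (c : ℝ) : ℝ × ℝ → ℝ :=
  fun z => c * f₁ z + (1 - c) * f₂ z

/-- `f₁ = φ(·; μ₁, V₁)` and `f₂ = φ(·; μ₂, V₂)` are codirectional:
`μ₁ - μ₂` is an eigenvector of both `V₁` and `V₂`. -/
def Codirectional (μ₁ μ₂ : Fin 2 → ℝ) (V₁ V₂ : Matrix (Fin 2) (Fin 2) ℝ) : Prop :=
  ∃ a b : ℝ, V₁ *ᵥ (μ₁ - μ₂) = a • (μ₁ - μ₂) ∧ V₂ *ᵥ (μ₁ - μ₂) = b • (μ₁ - μ₂)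

/-- The covariance matrices `V₁` and `V₂` are proportional. -/
def Proportional (V₁ V₂ : Matrix (Fin 2) (Fin 2) ℝ) : Prop :=
  ∃ c : ℝ, 0 < c ∧ V₁ = c • V₂

/-- An affine line in the plane. -/
def IsAffineLine (ℓ : Set (ℝ × ℝ)) : Prop :=
  ∃ p v : ℝ × ℝ, v ≠ 0 ∧ ℓ = {q | ∃ t : ℝ, q = p + t • v}

end


set_option maxHeartbeats 1600000

open Matrix Set

/-- If between any two elements of `A` there is an element of `Z`, and `Z` is finite,
then `A` is finite with at most `Z.ncard + 1` elements. -/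
lemma count_between {A Z : Set ℝ} (hZ : Z.Finite)
    (h : ∀ a ∈ A, ∀ b ∈ A, a < b → ∃ z ∈ Z, a < z ∧ z < b) :
    A.Finite ∧ A.ncard ≤ Z.ncard + 1 := by
  classical
  set φ : ℝ → WithTop ℝ := fun a => (hZ.toFinset.filter (fun z => a < z)).min with hφ
  have hmem : ∀ a, ∀ z₀ : ℝ, φ a = (z₀ : WithTop ℝ) → z₀ ∈ Z ∧ a < z₀ := by
    intro a z₀ h0
    have hz₀ := Finset.mem_of_min h0
    simp only [Finset.mem_filter, Set.Finite.mem_toFinset] at hz₀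
    exact hz₀
  have hinj : Set.InjOn φ A := by
    intro a ha b hb hab
    by_contra hne
    rcases lt_or_gt_of_ne hne with hlt | hlt
    · obtain ⟨z, hzZ, haz, hzb⟩ := h a ha b hb hlt
      have hzmem : z ∈ hZ.toFinset.filter (fun w => a < w) := by
        simp [Set.Finite.mem_toFinset, hzZ, haz]
      have hle : φ a ≤ (z : WithTop ℝ) := Finset.min_le hzmem
      obtain ⟨z₀, hz₀⟩ : ∃ z₀ : ℝ, φ a = (z₀ : WithTop ℝ) := by
        rcases Finset.min_of_mem hzmem with ⟨w, hw⟩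
        exact ⟨w, hw⟩
      obtain ⟨hz₀Z, hz₀gt⟩ := hmem a z₀ hz₀
      -- φ b = φ a = z₀, so z₀ ∈ filter (b < ·), so b < z₀
      have hz₀b : b < z₀ := by
        have := Finset.mem_of_min (hab ▸ hz₀ : φ b = (z₀ : WithTop ℝ))
        simp only [Finset.mem_filter, Set.Finite.mem_toFinset] at this
        exact this.2
      have hz₀z : z₀ ≤ z := by exact_mod_cast hz₀ ▸ hle
      linarith
    · obtain ⟨z, hzZ, haz, hzb⟩ := h b hb a ha hlt
      have hzmem : z ∈ hZ.toFinset.filter (fun w => b < w) := by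
        simp [Set.Finite.mem_toFinset, hzZ, haz]
      obtain ⟨z₀, hz₀⟩ : ∃ z₀ : ℝ, φ b = (z₀ : WithTop ℝ) := by
        rcases Finset.min_of_mem hzmem with ⟨w, hw⟩
        exact ⟨w, hw⟩
      have hle : φ b ≤ (z : WithTop ℝ) := Finset.min_le hzmem
      have hz₀z : z₀ ≤ z := by exact_mod_cast hz₀ ▸ hle
      have hz₀a : a < z₀ := by
        have := Finset.mem_of_min (hab ▸ hz₀ : φ a = (z₀ : WithTop ℝ))
        simp only [Finset.mem_filter, Set.Finite.mem_toFinset] at this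
        exact this.2
      linarith
  have himg : ∀ a ∈ A, φ a ∈ insert (⊤ : WithTop ℝ) ((fun z : ℝ => (z : WithTop ℝ)) '' Z) := by
    intro a _
    rcases hW : φ a with _ | z₀
    · exact Set.mem_insert _ _
    · right
      exact ⟨z₀, (hmem a z₀ hW).1, rfl⟩
  have htfin : (insert (⊤ : WithTop ℝ) ((fun z : ℝ => (z : WithTop ℝ)) '' Z)).Finite :=
    Set.Finite.insert _ (hZ.image _)
  constructor
  · exact Set.Finite.of_finite_image (htfin.subset (Set.image_subset_iff.2 himg)) hinj
  · calc A.ncard ≤ (insert (⊤ : WithTop ℝ) ((fun z : ℝ => (z : WithTop ℝ)) '' Z)).ncard :=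
          Set.ncard_le_ncard_of_injOn φ himg hinj htfin
    _ ≤ ((fun z : ℝ => (z : WithTop ℝ)) '' Z).ncard + 1 := Set.ncard_insert_le _ _
    _ ≤ Z.ncard + 1 := by
        gcongr
        exact Set.ncard_image_le hZ

lemma gauss_eq (μ : Fin 2 → ℝ) (V : Matrix (Fin 2) (Fin 2) ℝ) (z : ℝ × ℝ) :
    gauss μ V z = (2 * Real.pi * Real.sqrt V.det)⁻¹ *
      Real.exp (-(1 / 2) * (V⁻¹ 0 0 * (z.1 - μ 0) ^ 2 +
        (V⁻¹ 0 1 + V⁻¹ 1 0) * ((z.1 - μ 0) * (z.2 - μ 1)) + V⁻¹ 1 1 * (z.2 - μ 1) ^ 2)) := by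
  simp only [gauss, dotProduct, Matrix.mulVec, Fin.sum_univ_two, Matrix.cons_val_zero,
    Matrix.cons_val_one, Matrix.head_cons]
  ring_nf

lemma gauss_pos (μ : Fin 2 → ℝ) {V : Matrix (Fin 2) (Fin 2) ℝ} (hV : 0 < V.det) (z : ℝ × ℝ) :
    0 < gauss μ V z := by
  apply mul_pos
  · refine inv_pos.2 (mul_pos (by positivity) (Real.sqrt_pos.2 hV))
  · exact Real.exp_pos _

lemma hasDerivAt_gauss_comp {μ : Fin 2 → ℝ} {V : Matrix (Fin 2) (Fin 2) ℝ}
    (hsym : V⁻¹ 1 0 = V⁻¹ 0 1) {γ₁ γ₂ : ℝ → ℝ} {g₁ g₂ : ℝ} {t : ℝ}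
    (h₁ : HasDerivAt γ₁ g₁ t) (h₂ : HasDerivAt γ₂ g₂ t) :
    HasDerivAt (fun s => gauss μ V (γ₁ s, γ₂ s))
      (-(gauss μ V (γ₁ t, γ₂ t)) *
        ((V⁻¹ *ᵥ ![γ₁ t - μ 0, γ₂ t - μ 1]) ⬝ᵥ ![g₁, g₂])) t := by
  set k := (2 * Real.pi * Real.sqrt V.det)⁻¹ with hk
  have hp : HasDerivAt (fun s => γ₁ s - μ 0) g₁ t := h₁.sub_const _
  have hq : HasDerivAt (fun s => γ₂ s - μ 1) g₂ t := h₂.sub_const _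
  have hE : HasDerivAt (fun s => V⁻¹ 0 0 * (γ₁ s - μ 0) ^ 2 +
      (V⁻¹ 0 1 + V⁻¹ 1 0) * ((γ₁ s - μ 0) * (γ₂ s - μ 1)) + V⁻¹ 1 1 * (γ₂ s - μ 1) ^ 2)
      (V⁻¹ 0 0 * (2 * (γ₁ t - μ 0) * g₁) +
        (V⁻¹ 0 1 + V⁻¹ 1 0) * (g₁ * (γ₂ t - μ 1) + (γ₁ t - μ 0) * g₂) +
        V⁻¹ 1 1 * (2 * (γ₂ t - μ 1) * g₂)) t := by
    have e1 := (hp.pow 2).const_mul (V⁻¹ 0 0)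
    have e2 := (hp.mul hq).const_mul (V⁻¹ 0 1 + V⁻¹ 1 0)
    have e3 := (hq.pow 2).const_mul (V⁻¹ 1 1)
    refine ((e1.add e2).add e3).congr_deriv ?_
    ring
  have hfull := (((hE.const_mul (-(1/2 : ℝ))).exp).const_mul k)
  have hfe : (fun s => gauss μ V (γ₁ s, γ₂ s)) = (fun s =>
      k * Real.exp (-(1/2 : ℝ) * (V⁻¹ 0 0 * (γ₁ s - μ 0) ^ 2 +
        (V⁻¹ 0 1 + V⁻¹ 1 0) * ((γ₁ s - μ 0) * (γ₂ s - μ 1)) + V⁻¹ 1 1 * (γ₂ s - μ 1) ^ 2))) := by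
    funext s
    rw [gauss_eq]
  rw [hfe]
  refine hfull.congr_deriv (Eq.symm ?_)
  have hdot : (V⁻¹ *ᵥ ![γ₁ t - μ 0, γ₂ t - μ 1]) ⬝ᵥ ![g₁, g₂] * 2 =
      V⁻¹ 0 0 * (2 * (γ₁ t - μ 0) * g₁) +
        (V⁻¹ 0 1 + V⁻¹ 1 0) * (g₁ * (γ₂ t - μ 1) + (γ₁ t - μ 0) * g₂) +
        V⁻¹ 1 1 * (2 * (γ₂ t - μ 1) * g₂) := by
    simp only [Matrix.mulVec, dotProduct, Fin.sum_univ_two, Matrix.cons_val_zero,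
      Matrix.cons_val_one, Matrix.head_cons]
    rw [show V⁻¹ 1 0 = V⁻¹ 0 1 by exact hsym]
    ring
  have key : ∀ kk X dot Dv : ℝ, dot * 2 = Dv → -(kk * X) * dot = kk * (X * (-(1/2) * Dv)) := by
    intro kk X dot Dv hDv
    rw [← hDv]; ring
  rw [gauss_eq]
  exact key _ _ _ _ hdot

noncomputable section

def Smat (A B : Matrix (Fin 2) (Fin 2) ℝ) (α : ℝ) : Matrix (Fin 2) (Fin 2) ℝ :=
  (1 - α) • A + α • B

def bvec (A B : Matrix (Fin 2) (Fin 2) ℝ) (m1 m2 : Fin 2 → ℝ) (α : ℝ) : Fin 2 → ℝ :=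
  (1 - α) • (A *ᵥ m1) + α • (B *ᵥ m2)

def xvec (A B : Matrix (Fin 2) (Fin 2) ℝ) (m1 m2 : Fin 2 → ℝ) (α : ℝ) : Fin 2 → ℝ :=
  (Smat A B α)⁻¹ *ᵥ bvec A B m1 m2 α

def yvec (A B : Matrix (Fin 2) (Fin 2) ℝ) (m1 m2 : Fin 2 → ℝ) (α : ℝ) : Fin 2 → ℝ :=
  (Smat A B α)⁻¹ *ᵥ ((B *ᵥ m2 - A *ᵥ m1) - (B - A) *ᵥ xvec A B m1 m2 α)

end

lemma posDef_smul {M : Matrix (Fin 2) (Fin 2) ℝ} (hM : M.PosDef) {r : ℝ} (hr : 0 < r) :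
    (r • M).PosDef := by
  refine Matrix.PosDef.of_dotProduct_mulVec_pos ?_ ?_
  · unfold Matrix.IsHermitian
    rw [Matrix.conjTranspose_smul, hM.isHermitian.eq]
    simp
  · intro x hx
    rw [Matrix.smul_mulVec, dotProduct_smul]
    exact mul_pos hr (hM.dotProduct_mulVec_pos hx)

lemma Smat_posDef {A B : Matrix (Fin 2) (Fin 2) ℝ} (hA : A.PosDef) (hB : B.PosDef)
    {α : ℝ} (hα : α ∈ Set.Icc (0:ℝ) 1) : (Smat A B α).PosDef := by
  obtain ⟨h0, h1⟩ := hα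
  rcases eq_or_lt_of_le h1 with h1' | h1'
  · have : Smat A B α = B := by
      subst h1'; unfold Smat; simp
    rw [this]; exact hB
  · have hP : ((1 - α) • A).PosDef := posDef_smul hA (by linarith)
    rcases eq_or_lt_of_le h0 with h0' | h0'
    · have : Smat A B α = (1 - α) • A := by
        unfold Smat; rw [← h0']; simp
      rw [this]; exact hP
    · exact hP.add (posDef_smul hB h0')

lemma Smat_mulVec_xvec {A B : Matrix (Fin 2) (Fin 2) ℝ} {m1 m2 : Fin 2 → ℝ} {α : ℝ}
    (hdet : IsUnit (Smat A B α).det) :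
    Smat A B α *ᵥ xvec A B m1 m2 α = bvec A B m1 m2 α := by
  unfold xvec
  rw [Matrix.mulVec_mulVec, Matrix.mul_nonsing_inv _ hdet, Matrix.one_mulVec]

lemma comb_eq_zero {A B : Matrix (Fin 2) (Fin 2) ℝ} {m1 m2 : Fin 2 → ℝ} {α : ℝ}
    (hdet : IsUnit (Smat A B α).det) :
    (1 - α) • (A *ᵥ (xvec A B m1 m2 α - m1)) + α • (B *ᵥ (xvec A B m1 m2 α - m2)) = 0 := by
  have h := Smat_mulVec_xvec (m1 := m1) (m2 := m2) hdet
  have expand : Smat A B α *ᵥ xvec A B m1 m2 α =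
      (1 - α) • (A *ᵥ xvec A B m1 m2 α) + α • (B *ᵥ xvec A B m1 m2 α) := by
    unfold Smat
    rw [Matrix.add_mulVec, Matrix.smul_mulVec, Matrix.smul_mulVec]
  rw [expand] at h
  have : (1 - α) • (A *ᵥ (xvec A B m1 m2 α - m1)) + α • (B *ᵥ (xvec A B m1 m2 α - m2)) =
      ((1 - α) • (A *ᵥ xvec A B m1 m2 α) + α • (B *ᵥ xvec A B m1 m2 α)) - bvec A B m1 m2 α := by
    rw [Matrix.mulVec_sub, Matrix.mulVec_sub]
    unfold bvec
    module
  rw [this, h, sub_self]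

lemma xvec_sub_m2 {A B : Matrix (Fin 2) (Fin 2) ℝ} {m1 m2 : Fin 2 → ℝ} {α : ℝ}
    (hdet : IsUnit (Smat A B α).det) :
    xvec A B m1 m2 α - m2 = -((1 - α) • (((Smat A B α)⁻¹ * A) *ᵥ (m2 - m1))) := by
  have key : Smat A B α *ᵥ (xvec A B m1 m2 α - m2) = -((1 - α) • (A *ᵥ (m2 - m1))) := by
    rw [Matrix.mulVec_sub, Smat_mulVec_xvec hdet]
    unfold bvec Smat
    rw [Matrix.add_mulVec, Matrix.smul_mulVec, Matrix.smul_mulVec,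
      Matrix.mulVec_sub]
    module
  have := congrArg (fun v => (Smat A B α)⁻¹ *ᵥ v) key
  simpa only [Matrix.mulVec_mulVec, Matrix.nonsing_inv_mul _ hdet, Matrix.one_mulVec,
    Matrix.mulVec_neg, Matrix.mulVec_smul] using this

lemma xvec_sub_m1 {A B : Matrix (Fin 2) (Fin 2) ℝ} {m1 m2 : Fin 2 → ℝ} {α : ℝ}
    (hdet : IsUnit (Smat A B α).det) :
    xvec A B m1 m2 α - m1 = α • (((Smat A B α)⁻¹ * B) *ᵥ (m2 - m1)) := by
  have key : Smat A B α *ᵥ (xvec A B m1 m2 α - m1) = α • (B *ᵥ (m2 - m1)) := by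
    rw [Matrix.mulVec_sub, Smat_mulVec_xvec hdet]
    unfold bvec Smat
    rw [Matrix.add_mulVec, Matrix.smul_mulVec, Matrix.smul_mulVec,
      Matrix.mulVec_sub]
    module
  have := congrArg (fun v => (Smat A B α)⁻¹ *ᵥ v) key
  simpa only [Matrix.mulVec_mulVec, Matrix.nonsing_inv_mul _ hdet, Matrix.one_mulVec,
    Matrix.mulVec_smul] using this

lemma hasDerivAt_Smat_entry (A B : Matrix (Fin 2) (Fin 2) ℝ) (i j : Fin 2) (α₀ : ℝ) :
    HasDerivAt (fun α => Smat A B α i j) ((B - A) i j) α₀ := by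
  have heq : (fun α => Smat A B α i j) = fun α => (1 - α) * A i j + α * B i j := by
    funext α
    simp [Smat, Matrix.add_apply, Matrix.smul_apply, smul_eq_mul]
  rw [heq]
  have h1 : HasDerivAt (fun α : ℝ => (1 - α) * A i j + α * B i j)
      ((-1) * A i j + 1 * B i j) α₀ := by
    exact (((hasDerivAt_id α₀).const_sub 1).mul_const _).add ((hasDerivAt_id α₀).mul_const _)
  convert h1 using 1
  simp [Matrix.sub_apply]; ring

lemma hasDerivAt_bvec_entry (A B : Matrix (Fin 2) (Fin 2) ℝ) (m1 m2 : Fin 2 → ℝ) (i : Fin 2)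
    (α₀ : ℝ) :
    HasDerivAt (fun α => bvec A B m1 m2 α i) ((B *ᵥ m2 - A *ᵥ m1) i) α₀ := by
  have heq : (fun α => bvec A B m1 m2 α i) = fun α => (1 - α) * (A *ᵥ m1) i + α * (B *ᵥ m2) i := by
    funext α
    simp only [bvec, Pi.add_apply, Pi.smul_apply, smul_eq_mul]
  rw [heq]
  have h1 : HasDerivAt (fun α : ℝ => (1 - α) * (A *ᵥ m1) i + α * (B *ᵥ m2) i)
      ((-1) * (A *ᵥ m1) i + 1 * (B *ᵥ m2) i) α₀ := by
    exact (((hasDerivAt_id α₀).const_sub 1).mul_const _).add ((hasDerivAt_id α₀).mul_const _)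
  convert h1 using 1
  simp [Pi.sub_apply]; ring

lemma hasDerivAt_det_Smat (A B : Matrix (Fin 2) (Fin 2) ℝ) (α₀ : ℝ) :
    HasDerivAt (fun α => (Smat A B α).det)
      ((B - A) 0 0 * Smat A B α₀ 1 1 + Smat A B α₀ 0 0 * (B - A) 1 1 -
        ((B - A) 0 1 * Smat A B α₀ 1 0 + Smat A B α₀ 0 1 * (B - A) 1 0)) α₀ := by
  have heq : (fun α => (Smat A B α).det) =
      fun α => Smat A B α 0 0 * Smat A B α 1 1 - Smat A B α 0 1 * Smat A B α 1 0 := by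
    funext α; rw [Matrix.det_fin_two]
  rw [heq]
  exact ((hasDerivAt_Smat_entry A B 0 0 α₀).mul (hasDerivAt_Smat_entry A B 1 1 α₀)).sub
    ((hasDerivAt_Smat_entry A B 0 1 α₀).mul (hasDerivAt_Smat_entry A B 1 0 α₀))

lemma xvec_entry_eq {A B : Matrix (Fin 2) (Fin 2) ℝ} {m1 m2 : Fin 2 → ℝ} {α : ℝ}
    (hdet : (Smat A B α).det ≠ 0) :
    (xvec A B m1 m2 α 0 = (Smat A B α 1 1 * bvec A B m1 m2 α 0 -
        Smat A B α 0 1 * bvec A B m1 m2 α 1) / (Smat A B α).det) ∧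
    (xvec A B m1 m2 α 1 = (Smat A B α 0 0 * bvec A B m1 m2 α 1 -
        Smat A B α 1 0 * bvec A B m1 m2 α 0) / (Smat A B α).det) := by
  have hinv : (Smat A B α)⁻¹ = ((Smat A B α).det)⁻¹ • (Smat A B α).adjugate := by
    rw [Matrix.inv_def, Ring.inverse_eq_inv]
  have hadj := Matrix.adjugate_fin_two (Smat A B α)
  constructor <;>
  · unfold xvec
    rw [hinv, hadj]
    simp [Matrix.smul_mulVec, Matrix.mulVec, dotProduct, Fin.sum_univ_two]
    ring

lemma hasDerivAt_xvec {A B : Matrix (Fin 2) (Fin 2) ℝ} {m1 m2 : Fin 2 → ℝ} {α₀ : ℝ}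
    (hdet : ∀ᶠ α in nhds α₀, (Smat A B α).det ≠ 0) :
    ∀ i, HasDerivAt (fun α => xvec A B m1 m2 α i) (yvec A B m1 m2 α₀ i) α₀ := by
  have hdet₀ : (Smat A B α₀).det ≠ 0 := hdet.self_of_nhds
  set N0 : ℝ → ℝ := fun α => Smat A B α 1 1 * bvec A B m1 m2 α 0 -
      Smat A B α 0 1 * bvec A B m1 m2 α 1 with hN0
  set N1 : ℝ → ℝ := fun α => Smat A B α 0 0 * bvec A B m1 m2 α 1 -
      Smat A B α 1 0 * bvec A B m1 m2 α 0 with hN1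
  have hDN0 : HasDerivAt N0 ((B - A) 1 1 * bvec A B m1 m2 α₀ 0 +
      Smat A B α₀ 1 1 * (B *ᵥ m2 - A *ᵥ m1) 0 -
      ((B - A) 0 1 * bvec A B m1 m2 α₀ 1 + Smat A B α₀ 0 1 * (B *ᵥ m2 - A *ᵥ m1) 1)) α₀ :=
    ((hasDerivAt_Smat_entry A B 1 1 α₀).mul (hasDerivAt_bvec_entry A B m1 m2 0 α₀)).sub
      ((hasDerivAt_Smat_entry A B 0 1 α₀).mul (hasDerivAt_bvec_entry A B m1 m2 1 α₀))
  have hDN1 : HasDerivAt N1 ((B - A) 0 0 * bvec A B m1 m2 α₀ 1 +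
      Smat A B α₀ 0 0 * (B *ᵥ m2 - A *ᵥ m1) 1 -
      ((B - A) 1 0 * bvec A B m1 m2 α₀ 0 + Smat A B α₀ 1 0 * (B *ᵥ m2 - A *ᵥ m1) 0)) α₀ :=
    ((hasDerivAt_Smat_entry A B 0 0 α₀).mul (hasDerivAt_bvec_entry A B m1 m2 1 α₀)).sub
      ((hasDerivAt_Smat_entry A B 1 0 α₀).mul (hasDerivAt_bvec_entry A B m1 m2 0 α₀))
  have hDD := hasDerivAt_det_Smat A B α₀
  have hx0' := (hDN0.div hDD hdet₀)
  have hx1' := (hDN1.div hDD hdet₀)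
  have he0 : (fun α => N0 α / (Smat A B α).det) =ᶠ[nhds α₀]
      (fun α => xvec A B m1 m2 α 0) := by
    filter_upwards [hdet] with α hα
    exact ((xvec_entry_eq hα).1).symm
  have he1 : (fun α => N1 α / (Smat A B α).det) =ᶠ[nhds α₀]
      (fun α => xvec A B m1 m2 α 1) := by
    filter_upwards [hdet] with α hα
    exact ((xvec_entry_eq hα).2).symm
  obtain ⟨v0, hx0⟩ : ∃ v, HasDerivAt (fun α => xvec A B m1 m2 α 0) v α₀ :=
    ⟨_, hx0'.congr_of_eventuallyEq he0.symm⟩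
  obtain ⟨v1, hx1⟩ : ∃ v, HasDerivAt (fun α => xvec A B m1 m2 α 1) v α₀ :=
    ⟨_, hx1'.congr_of_eventuallyEq he1.symm⟩
  set vv : Fin 2 → ℝ := ![v0, v1] with hvv
  have hxv : ∀ i, HasDerivAt (fun α => xvec A B m1 m2 α i) (vv i) α₀ := by
    intro i; fin_cases i
    · simpa [hvv] using hx0
    · simpa [hvv] using hx1
  have huniq : ∀ i : Fin 2, (B - A) i 0 * xvec A B m1 m2 α₀ 0 + Smat A B α₀ i 0 * vv 0 +
      ((B - A) i 1 * xvec A B m1 m2 α₀ 1 + Smat A B α₀ i 1 * vv 1) =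
      (B *ᵥ m2 - A *ᵥ m1) i := by
    intro i
    have hLHS : HasDerivAt (fun α => Smat A B α i 0 * xvec A B m1 m2 α 0 +
        Smat A B α i 1 * xvec A B m1 m2 α 1)
        ((B - A) i 0 * xvec A B m1 m2 α₀ 0 + Smat A B α₀ i 0 * vv 0 +
          ((B - A) i 1 * xvec A B m1 m2 α₀ 1 + Smat A B α₀ i 1 * vv 1)) α₀ :=
      ((hasDerivAt_Smat_entry A B i 0 α₀).mul (hxv 0)).add
        ((hasDerivAt_Smat_entry A B i 1 α₀).mul (hxv 1))
    have hfeq : (fun α => Smat A B α i 0 * xvec A B m1 m2 α 0 +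
        Smat A B α i 1 * xvec A B m1 m2 α 1) =ᶠ[nhds α₀] (fun α => bvec A B m1 m2 α i) := by
      filter_upwards [hdet] with α hα
      have h := congrFun (Smat_mulVec_xvec (m1 := m1) (m2 := m2) (isUnit_iff_ne_zero.2 hα)) i
      simpa [Matrix.mulVec, dotProduct, Fin.sum_univ_two] using h
    exact (hLHS.congr_of_eventuallyEq hfeq.symm).unique (hasDerivAt_bvec_entry A B m1 m2 i α₀)
  have hSv : Smat A B α₀ *ᵥ vv = (B *ᵥ m2 - A *ᵥ m1) - (B - A) *ᵥ xvec A B m1 m2 α₀ := by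
    funext i
    have h := huniq i
    simp only [Matrix.mulVec, dotProduct, Fin.sum_univ_two, Pi.sub_apply] at h ⊢
    linarith
  have hy : yvec A B m1 m2 α₀ = vv := by
    unfold yvec
    rw [← hSv, Matrix.mulVec_mulVec, Matrix.nonsing_inv_mul _ (isUnit_iff_ne_zero.2 hdet₀),
      Matrix.one_mulVec]
  intro i
  rw [hy]
  exact hxv i

lemma entry_symm {M : Matrix (Fin 2) (Fin 2) ℝ} (h : M.IsHermitian) : M 1 0 = M 0 1 := by
  have := congrFun (congrFun h.eq 1) 0
  rw [Matrix.conjTranspose_apply] at this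
  simpa using this.symm

lemma transpose_eq_of_hermitian {M : Matrix (Fin 2) (Fin 2) ℝ} (h : M.IsHermitian) : Mᵀ = M := by
  have := h.eq
  rwa [show Mᴴ = Mᵀ by ext i j; simp [Matrix.conjTranspose_apply]] at this

lemma dot_mulVec_transfer (N : Matrix (Fin 2) (Fin 2) ℝ) (x z : Fin 2 → ℝ) :
    (N *ᵥ x) ⬝ᵥ z = x ⬝ᵥ (Nᵀ *ᵥ z) := by
  rw [Matrix.dotProduct_mulVec, ← Matrix.mulVec_transpose, Matrix.transpose_transpose]

lemma posdef_dot {M : Matrix (Fin 2) (Fin 2) ℝ} (hM : M.PosDef) {x : Fin 2 → ℝ} (hx : x ≠ 0) :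
    0 < x ⬝ᵥ (M *ᵥ x) := by
  have h := hM.dotProduct_mulVec_pos hx
  simpa using h

lemma mulVec_ne_zero {M : Matrix (Fin 2) (Fin 2) ℝ} (hM : IsUnit M.det) {x : Fin 2 → ℝ}
    (hx : x ≠ 0) : M *ᵥ x ≠ 0 := by
  intro h
  apply hx
  have := congrArg (fun v => M⁻¹ *ᵥ v) h
  simpa only [Matrix.mulVec_mulVec, Matrix.nonsing_inv_mul _ hM, Matrix.one_mulVec,
    Matrix.mulVec_zero] using this

/-- The two critical-point equations at a local maximum of the mixture. -/
lemma mode_eqns {μ₁ μ₂ : Fin 2 → ℝ} {V₁ V₂ : Matrix (Fin 2) (Fin 2) ℝ}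
    (h₁ : V₁.PosDef) (h₂ : V₂.PosDef) {c : ℝ} {z : ℝ × ℝ}
    (hz : IsLocalMax (mix (gauss μ₁ V₁) (gauss μ₂ V₂) c) z) :
    ∀ i : Fin 2,
      c * gauss μ₁ V₁ z * ((V₁⁻¹ *ᵥ ![z.1 - μ₁ 0, z.2 - μ₁ 1]) i) +
      (1 - c) * gauss μ₂ V₂ z * ((V₂⁻¹ *ᵥ ![z.1 - μ₂ 0, z.2 - μ₂ 1]) i) = 0 := by
  have hs₁ : V₁⁻¹ 1 0 = V₁⁻¹ 0 1 := entry_symm h₁.inv.1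
  have hs₂ : V₂⁻¹ 1 0 = V₂⁻¹ 0 1 := entry_symm h₂.inv.1
  have e0 : c * gauss μ₁ V₁ z * ((V₁⁻¹ *ᵥ ![z.1 - μ₁ 0, z.2 - μ₁ 1]) 0) +
      (1 - c) * gauss μ₂ V₂ z * ((V₂⁻¹ *ᵥ ![z.1 - μ₂ 0, z.2 - μ₂ 1]) 0) = 0 := by
    have hloc : IsLocalMax (fun t => mix (gauss μ₁ V₁) (gauss μ₂ V₂) c (z.1 + t, z.2)) 0 := by
      have hcont : Filter.Tendsto (fun t : ℝ => ((z.1 + t, z.2) : ℝ × ℝ)) (nhds 0) (nhds z) := by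
        have : Filter.Tendsto (fun t : ℝ => ((z.1 + t, z.2) : ℝ × ℝ)) (nhds 0)
            (nhds (z.1 + 0, z.2)) := by
          apply Filter.Tendsto.prodMk_nhds
          · exact (continuous_const.add continuous_id).continuousAt
          · exact tendsto_const_nhds
        simpa using this
      have := hcont.eventually hz
      simpa [IsLocalMax, IsMaxFilter] using this
    have hg1 := hasDerivAt_gauss_comp (μ := μ₁) hs₁
      ((hasDerivAt_id (0:ℝ)).const_add z.1) (hasDerivAt_const (0:ℝ) z.2)
    have hg2 := hasDerivAt_gauss_comp (μ := μ₂) hs₂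
      ((hasDerivAt_id (0:ℝ)).const_add z.1) (hasDerivAt_const (0:ℝ) z.2)
    have hF : HasDerivAt (fun t => mix (gauss μ₁ V₁) (gauss μ₂ V₂) c (z.1 + t, z.2))
        (c * (-(gauss μ₁ V₁ (z.1 + 0, z.2)) *
          ((V₁⁻¹ *ᵥ ![z.1 + 0 - μ₁ 0, z.2 - μ₁ 1]) ⬝ᵥ ![1, 0])) +
         (1 - c) * (-(gauss μ₂ V₂ (z.1 + 0, z.2)) *
          ((V₂⁻¹ *ᵥ ![z.1 + 0 - μ₂ 0, z.2 - μ₂ 1]) ⬝ᵥ ![1, 0]))) 0 := by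
      exact (hg1.const_mul c).add (hg2.const_mul (1 - c))
    have hd0 := hloc.deriv_eq_zero
    rw [hF.deriv] at hd0
    have hz0 : ((z.1 + 0, z.2) : ℝ × ℝ) = z := by simp
    rw [hz0] at hd0
    simp only [add_zero, dotProduct, Fin.sum_univ_two, Matrix.cons_val_zero,
      Matrix.cons_val_one, Matrix.head_cons, mul_one, mul_zero] at hd0 ⊢
    linarith
  have e1 : c * gauss μ₁ V₁ z * ((V₁⁻¹ *ᵥ ![z.1 - μ₁ 0, z.2 - μ₁ 1]) 1) +
      (1 - c) * gauss μ₂ V₂ z * ((V₂⁻¹ *ᵥ ![z.1 - μ₂ 0, z.2 - μ₂ 1]) 1) = 0 := by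
    have hloc : IsLocalMax (fun t => mix (gauss μ₁ V₁) (gauss μ₂ V₂) c (z.1, z.2 + t)) 0 := by
      have hcont : Filter.Tendsto (fun t : ℝ => ((z.1, z.2 + t) : ℝ × ℝ)) (nhds 0) (nhds z) := by
        have : Filter.Tendsto (fun t : ℝ => ((z.1, z.2 + t) : ℝ × ℝ)) (nhds 0)
            (nhds (z.1, z.2 + 0)) := by
          apply Filter.Tendsto.prodMk_nhds
          · exact tendsto_const_nhds
          · exact (continuous_const.add continuous_id).continuousAt
        simpa using this
      have := hcont.eventually hz
      simpa [IsLocalMax, IsMaxFilter] using this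
    have hg1 := hasDerivAt_gauss_comp (μ := μ₁) hs₁
      (hasDerivAt_const (0:ℝ) z.1) ((hasDerivAt_id (0:ℝ)).const_add z.2)
    have hg2 := hasDerivAt_gauss_comp (μ := μ₂) hs₂
      (hasDerivAt_const (0:ℝ) z.1) ((hasDerivAt_id (0:ℝ)).const_add z.2)
    have hF : HasDerivAt (fun t => mix (gauss μ₁ V₁) (gauss μ₂ V₂) c (z.1, z.2 + t))
        (c * (-(gauss μ₁ V₁ (z.1, z.2 + 0)) *
          ((V₁⁻¹ *ᵥ ![z.1 - μ₁ 0, z.2 + 0 - μ₁ 1]) ⬝ᵥ ![0, 1])) +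
         (1 - c) * (-(gauss μ₂ V₂ (z.1, z.2 + 0)) *
          ((V₂⁻¹ *ᵥ ![z.1 - μ₂ 0, z.2 + 0 - μ₂ 1]) ⬝ᵥ ![0, 1]))) 0 := by
      exact (hg1.const_mul c).add (hg2.const_mul (1 - c))
    have hd0 := hloc.deriv_eq_zero
    rw [hF.deriv] at hd0
    have hz0 : ((z.1, z.2 + 0) : ℝ × ℝ) = z := by simp
    rw [hz0] at hd0
    simp only [add_zero, dotProduct, Fin.sum_univ_two, Matrix.cons_val_zero,
      Matrix.cons_val_one, Matrix.head_cons, mul_one, mul_zero] at hd0 ⊢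
    linarith
  intro i
  fin_cases i
  · exact e0
  · exact e1

lemma vec2_eta (v : Fin 2 → ℝ) : ![v 0, v 1] = v := by
  funext i; fin_cases i <;> simp

lemma sign_const {f : ℝ → ℝ} {s t : ℝ}
    (hcont : ∀ x ∈ Set.Ioo s t, ContinuousAt f x) (hne : ∀ x ∈ Set.Ioo s t, f x ≠ 0)
    {x y : ℝ} (hx : x ∈ Set.Ioo s t) (hy : y ∈ Set.Ioo s t) (hfx : 0 < f x) : 0 < f y := by
  by_contra hfy
  have hfy' : f y < 0 := lt_of_le_of_ne (not_lt.1 hfy) (hne y hy)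
  rcases lt_trichotomy x y with hxy | hxy | hxy
  · have hsub : Set.Icc x y ⊆ Set.Ioo s t := by
      intro w hw; exact ⟨lt_of_lt_of_le hx.1 hw.1, lt_of_le_of_lt hw.2 hy.2⟩
    have hcon : ContinuousOn f (Set.Icc x y) := fun w hw => (hcont w (hsub hw)).continuousWithinAt
    have := intermediate_value_Icc' (le_of_lt hxy) hcon (a := x) (b := y)
    have h0 : (0:ℝ) ∈ Set.Icc (f y) (f x) := ⟨le_of_lt hfy', le_of_lt hfx⟩
    obtain ⟨w, hw, hfw⟩ := this h0
    exact hne w (hsub hw) hfw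
  · rw [hxy] at hfx; linarith
  · have hsub : Set.Icc y x ⊆ Set.Ioo s t := by
      intro w hw; exact ⟨lt_of_lt_of_le hy.1 hw.1, lt_of_le_of_lt hw.2 hx.2⟩
    have hcon : ContinuousOn f (Set.Icc y x) := fun w hw => (hcont w (hsub hw)).continuousWithinAt
    have := intermediate_value_Icc (le_of_lt hxy) hcon (a := y) (b := x)
    have h0 : (0:ℝ) ∈ Set.Icc (f y) (f x) := ⟨le_of_lt hfy', le_of_lt hfx⟩
    obtain ⟨w, hw, hfw⟩ := this h0
    exact hne w (hsub hw) hfw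


noncomputable section
def wwF (A B : Matrix (Fin 2) (Fin 2) ℝ) (m1 m2 : Fin 2 → ℝ) (α : ℝ) : Fin 2 → ℝ :=
  B *ᵥ (xvec A B m1 m2 α - m2)
def uuF (A B : Matrix (Fin 2) (Fin 2) ℝ) (m1 m2 : Fin 2 → ℝ) (α : ℝ) : Fin 2 → ℝ :=
  A *ᵥ (xvec A B m1 m2 α - m1)
def pF (A B : Matrix (Fin 2) (Fin 2) ℝ) (mm : Fin 2 → ℝ) (α : ℝ) : ℝ :=
  ((B * ((Smat A B α)⁻¹ * A)) *ᵥ mm) ⬝ᵥ ((Smat A B α)⁻¹ *ᵥ ((B * ((Smat A B α)⁻¹ * A)) *ᵥ mm))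
end

section
variable {A B : Matrix (Fin 2) (Fin 2) ℝ} {m1 m2 : Fin 2 → ℝ} {α : ℝ}

lemma Smat_unit (hA : A.PosDef) (hB : B.PosDef) (hα : α ∈ Set.Icc (0:ℝ) 1) :
    IsUnit (Smat A B α).det :=
  isUnit_iff_ne_zero.2 (Smat_posDef hA hB hα).det_pos.ne'

lemma pF_eq (hA : A.PosDef) (hB : B.PosDef) (hα : α ∈ Set.Icc (0:ℝ) 1) (mm : Fin 2 → ℝ) :
    dotProduct mm
      ((A * (Smat A B α)⁻¹ * B * (Smat A B α)⁻¹ * B * (Smat A B α)⁻¹ * A) *ᵥ mm) =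
    pF A B mm α := by
  have hsS : ((Smat A B α)⁻¹)ᵀ = (Smat A B α)⁻¹ :=
    transpose_eq_of_hermitian (Smat_posDef hA hB hα).inv.1
  have hsA : Aᵀ = A := transpose_eq_of_hermitian hA.1
  have hsB : Bᵀ = B := transpose_eq_of_hermitian hB.1
  unfold pF
  rw [dot_mulVec_transfer]
  simp only [Matrix.mulVec_mulVec, Matrix.transpose_mul, hsS, hsA, hsB, ← mul_assoc]

lemma pF_pos (hA : A.PosDef) (hB : B.PosDef) (hα : α ∈ Set.Icc (0:ℝ) 1) {mm : Fin 2 → ℝ}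
    (hmm : mm ≠ 0) : 0 < pF A B mm α := by
  have hdet : IsUnit (B * ((Smat A B α)⁻¹ * A)).det := by
    rw [Matrix.det_mul, Matrix.det_mul]
    exact (isUnit_iff_ne_zero.2 hB.det_pos.ne').mul
      ((isUnit_iff_ne_zero.2 (Smat_posDef hA hB hα).inv.det_pos.ne').mul
        (isUnit_iff_ne_zero.2 hA.det_pos.ne'))
  exact posdef_dot (Smat_posDef hA hB hα).inv (mulVec_ne_zero hdet hmm)

lemma wwF_eq (hA : A.PosDef) (hB : B.PosDef) (hα : α ∈ Set.Icc (0:ℝ) 1) :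
    wwF A B m1 m2 α = (-(1 - α)) • ((B * ((Smat A B α)⁻¹ * A)) *ᵥ (m2 - m1)) := by
  unfold wwF
  rw [xvec_sub_m2 (Smat_unit hA hB hα), Matrix.mulVec_neg, Matrix.mulVec_smul,
    Matrix.mulVec_mulVec, neg_smul, ← Matrix.mul_assoc]

lemma wwF_ne_zero (hA : A.PosDef) (hB : B.PosDef) (hα : α ∈ Set.Ioo (0:ℝ) 1)
    (hmm : m2 - m1 ≠ 0) : wwF A B m1 m2 α ≠ 0 := by
  rw [wwF_eq hA hB (Set.Ioo_subset_Icc_self hα)]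
  have hdet : IsUnit (B * ((Smat A B α)⁻¹ * A)).det := by
    rw [Matrix.det_mul, Matrix.det_mul]
    exact (isUnit_iff_ne_zero.2 hB.det_pos.ne').mul
      ((isUnit_iff_ne_zero.2 (Smat_posDef hA hB (Set.Ioo_subset_Icc_self hα)).inv.det_pos.ne').mul
        (isUnit_iff_ne_zero.2 hA.det_pos.ne'))
  exact smul_ne_zero (by simp; linarith [hα.2]) (mulVec_ne_zero hdet hmm)

lemma uuF_eq (hA : A.PosDef) (hB : B.PosDef) (hα : α ∈ Set.Ioo (0:ℝ) 1) :
    uuF A B m1 m2 α = (-(α / (1 - α))) • wwF A B m1 m2 α := by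
  have h1α : (1:ℝ) - α ≠ 0 := by linarith [hα.2]
  have h := comb_eq_zero (A := A) (B := B) (m1 := m1) (m2 := m2)
    (Smat_unit hA hB (Set.Ioo_subset_Icc_self hα))
  funext i
  have hi := congrFun h i
  simp only [Pi.add_apply, Pi.smul_apply, smul_eq_mul, Pi.zero_apply] at hi
  show uuF A B m1 m2 α i = -(α / (1 - α)) * wwF A B m1 m2 α i
  have hu : uuF A B m1 m2 α i = (A *ᵥ (xvec A B m1 m2 α - m1)) i := rfl
  have hw : wwF A B m1 m2 α i = (B *ᵥ (xvec A B m1 m2 α - m2)) i := rfl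
  rw [hu, hw]
  field_simp
  linarith

lemma yvec_eq (hA : A.PosDef) (hB : B.PosDef) (hα : α ∈ Set.Ioo (0:ℝ) 1) :
    yvec A B m1 m2 α = (-(1 / (1 - α))) • ((Smat A B α)⁻¹ *ᵥ wwF A B m1 m2 α) := by
  have h1α : (1:ℝ) - α ≠ 0 := by linarith [hα.2]
  have hsub : (B *ᵥ m2 - A *ᵥ m1) - (B - A) *ᵥ xvec A B m1 m2 α =
      uuF A B m1 m2 α - wwF A B m1 m2 α := by
    unfold uuF wwF
    rw [Matrix.mulVec_sub, Matrix.mulVec_sub, Matrix.sub_mulVec]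
    module
  have hcomb : uuF A B m1 m2 α - wwF A B m1 m2 α = (-(1 / (1 - α))) • wwF A B m1 m2 α := by
    rw [uuF_eq hA hB hα]
    funext i
    simp only [Pi.sub_apply, Pi.smul_apply, smul_eq_mul]
    field_simp
    ring
  unfold yvec
  rw [hsub, hcomb, Matrix.mulVec_smul]

lemma dot_wwy (hA : A.PosDef) (hB : B.PosDef) (hα : α ∈ Set.Ioo (0:ℝ) 1) :
    wwF A B m1 m2 α ⬝ᵥ yvec A B m1 m2 α = -((1 - α) * pF A B (m2 - m1) α) := by
  have h1α : (1:ℝ) - α ≠ 0 := by linarith [hα.2]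
  rw [yvec_eq hA hB hα, dotProduct_smul, smul_eq_mul]
  have hdd : wwF A B m1 m2 α ⬝ᵥ ((Smat A B α)⁻¹ *ᵥ wwF A B m1 m2 α) =
      (1 - α) ^ 2 * pF A B (m2 - m1) α := by
    rw [wwF_eq hA hB (Set.Ioo_subset_Icc_self hα)]
    rw [Matrix.mulVec_smul, dotProduct_smul, smul_dotProduct]
    unfold pF
    simp only [smul_eq_mul]
    ring
  rw [hdd]
  field_simp

lemma dot_uuy (hA : A.PosDef) (hB : B.PosDef) (hα : α ∈ Set.Ioo (0:ℝ) 1) :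
    uuF A B m1 m2 α ⬝ᵥ yvec A B m1 m2 α = α * pF A B (m2 - m1) α := by
  have h1α : (1:ℝ) - α ≠ 0 := by linarith [hα.2]
  rw [uuF_eq hA hB hα, smul_dotProduct, smul_eq_mul, dot_wwy hA hB hα]
  field_simp

end


section
variable {μ₁ μ₂ : Fin 2 → ℝ} {V₁ V₂ : Matrix (Fin 2) (Fin 2) ℝ}

lemma det_Smat_ne_nhds (h₁ : V₁.PosDef) (h₂ : V₂.PosDef) {α₀ : ℝ}
    (hα : α₀ ∈ Set.Icc (0:ℝ) 1) :
    ∀ᶠ α in nhds α₀, (Smat V₁⁻¹ V₂⁻¹ α).det ≠ 0 :=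
  (hasDerivAt_det_Smat _ _ α₀).continuousAt.eventually_ne
    (Smat_posDef h₁.inv h₂.inv hα).det_pos.ne'

lemma hasDerivAt_f1_ridge (h₁ : V₁.PosDef) (h₂ : V₂.PosDef) {α₀ : ℝ}
    (hα : α₀ ∈ Set.Ioo (0:ℝ) 1) :
    HasDerivAt (fun α => gauss μ₁ V₁ (xvec V₁⁻¹ V₂⁻¹ μ₁ μ₂ α 0, xvec V₁⁻¹ V₂⁻¹ μ₁ μ₂ α 1))
      (-(gauss μ₁ V₁ (xvec V₁⁻¹ V₂⁻¹ μ₁ μ₂ α₀ 0, xvec V₁⁻¹ V₂⁻¹ μ₁ μ₂ α₀ 1)) *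
        (α₀ * pF V₁⁻¹ V₂⁻¹ (μ₂ - μ₁) α₀)) α₀ := by
  have hx := hasDerivAt_xvec (m1 := μ₁) (m2 := μ₂)
    (det_Smat_ne_nhds h₁ h₂ (Set.Ioo_subset_Icc_self hα))
  have hg := hasDerivAt_gauss_comp (μ := μ₁) (V := V₁) (entry_symm h₁.inv.1) (hx 0) (hx 1)
  have hv1 : ![xvec V₁⁻¹ V₂⁻¹ μ₁ μ₂ α₀ 0 - μ₁ 0, xvec V₁⁻¹ V₂⁻¹ μ₁ μ₂ α₀ 1 - μ₁ 1]
      = xvec V₁⁻¹ V₂⁻¹ μ₁ μ₂ α₀ - μ₁ := by funext i; fin_cases i <;> simp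
  have hv2 : ![yvec V₁⁻¹ V₂⁻¹ μ₁ μ₂ α₀ 0, yvec V₁⁻¹ V₂⁻¹ μ₁ μ₂ α₀ 1]
      = yvec V₁⁻¹ V₂⁻¹ μ₁ μ₂ α₀ := vec2_eta _
  rw [hv1, hv2] at hg
  have hdot : (V₁⁻¹ *ᵥ (xvec V₁⁻¹ V₂⁻¹ μ₁ μ₂ α₀ - μ₁)) ⬝ᵥ yvec V₁⁻¹ V₂⁻¹ μ₁ μ₂ α₀
      = α₀ * pF V₁⁻¹ V₂⁻¹ (μ₂ - μ₁) α₀ := dot_uuy h₁.inv h₂.inv hα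
  rw [hdot] at hg
  exact hg

lemma hasDerivAt_f2_ridge (h₁ : V₁.PosDef) (h₂ : V₂.PosDef) {α₀ : ℝ}
    (hα : α₀ ∈ Set.Ioo (0:ℝ) 1) :
    HasDerivAt (fun α => gauss μ₂ V₂ (xvec V₁⁻¹ V₂⁻¹ μ₁ μ₂ α 0, xvec V₁⁻¹ V₂⁻¹ μ₁ μ₂ α 1))
      (gauss μ₂ V₂ (xvec V₁⁻¹ V₂⁻¹ μ₁ μ₂ α₀ 0, xvec V₁⁻¹ V₂⁻¹ μ₁ μ₂ α₀ 1) *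
        ((1 - α₀) * pF V₁⁻¹ V₂⁻¹ (μ₂ - μ₁) α₀)) α₀ := by
  have hx := hasDerivAt_xvec (m1 := μ₁) (m2 := μ₂)
    (det_Smat_ne_nhds h₁ h₂ (Set.Ioo_subset_Icc_self hα))
  have hg := hasDerivAt_gauss_comp (μ := μ₂) (V := V₂) (entry_symm h₂.inv.1) (hx 0) (hx 1)
  have hv1 : ![xvec V₁⁻¹ V₂⁻¹ μ₁ μ₂ α₀ 0 - μ₂ 0, xvec V₁⁻¹ V₂⁻¹ μ₁ μ₂ α₀ 1 - μ₂ 1]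
      = xvec V₁⁻¹ V₂⁻¹ μ₁ μ₂ α₀ - μ₂ := by funext i; fin_cases i <;> simp
  have hv2 : ![yvec V₁⁻¹ V₂⁻¹ μ₁ μ₂ α₀ 0, yvec V₁⁻¹ V₂⁻¹ μ₁ μ₂ α₀ 1]
      = yvec V₁⁻¹ V₂⁻¹ μ₁ μ₂ α₀ := vec2_eta _
  rw [hv1, hv2] at hg
  have hdot : (V₂⁻¹ *ᵥ (xvec V₁⁻¹ V₂⁻¹ μ₁ μ₂ α₀ - μ₂)) ⬝ᵥ yvec V₁⁻¹ V₂⁻¹ μ₁ μ₂ α₀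
      = -((1 - α₀) * pF V₁⁻¹ V₂⁻¹ (μ₂ - μ₁) α₀) := dot_wwy h₁.inv h₂.inv hα
  rw [hdot] at hg
  convert hg using 1
  ring

lemma hasDerivAt_Delta_ridge (h₁ : V₁.PosDef) (h₂ : V₂.PosDef) (c : ℝ) {α₀ : ℝ}
    (hα : α₀ ∈ Set.Ioo (0:ℝ) 1) :
    HasDerivAt (fun α => (1 - α) * ((1 - c) * gauss μ₂ V₂
        (xvec V₁⁻¹ V₂⁻¹ μ₁ μ₂ α 0, xvec V₁⁻¹ V₂⁻¹ μ₁ μ₂ α 1)) -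
      α * (c * gauss μ₁ V₁ (xvec V₁⁻¹ V₂⁻¹ μ₁ μ₂ α 0, xvec V₁⁻¹ V₂⁻¹ μ₁ μ₂ α 1)))
      ((-1) * ((1 - c) * gauss μ₂ V₂ (xvec V₁⁻¹ V₂⁻¹ μ₁ μ₂ α₀ 0, xvec V₁⁻¹ V₂⁻¹ μ₁ μ₂ α₀ 1)) +
        (1 - α₀) * ((1 - c) * (gauss μ₂ V₂ (xvec V₁⁻¹ V₂⁻¹ μ₁ μ₂ α₀ 0, xvec V₁⁻¹ V₂⁻¹ μ₁ μ₂ α₀ 1) *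
          ((1 - α₀) * pF V₁⁻¹ V₂⁻¹ (μ₂ - μ₁) α₀))) -
        (1 * (c * gauss μ₁ V₁ (xvec V₁⁻¹ V₂⁻¹ μ₁ μ₂ α₀ 0, xvec V₁⁻¹ V₂⁻¹ μ₁ μ₂ α₀ 1)) +
          α₀ * (c * (-(gauss μ₁ V₁ (xvec V₁⁻¹ V₂⁻¹ μ₁ μ₂ α₀ 0, xvec V₁⁻¹ V₂⁻¹ μ₁ μ₂ α₀ 1)) *
            (α₀ * pF V₁⁻¹ V₂⁻¹ (μ₂ - μ₁) α₀))))) α₀ := by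
  exact (((hasDerivAt_id α₀).const_sub 1).mul ((hasDerivAt_f2_ridge h₁ h₂ hα).const_mul (1 - c))).sub
    ((hasDerivAt_id α₀).mul ((hasDerivAt_f1_ridge h₁ h₂ hα).const_mul c))

lemma hasDerivAt_mix_ridge (h₁ : V₁.PosDef) (h₂ : V₂.PosDef) (c : ℝ) {α₀ : ℝ}
    (hα : α₀ ∈ Set.Ioo (0:ℝ) 1) :
    HasDerivAt (fun α => mix (gauss μ₁ V₁) (gauss μ₂ V₂) c
        (xvec V₁⁻¹ V₂⁻¹ μ₁ μ₂ α 0, xvec V₁⁻¹ V₂⁻¹ μ₁ μ₂ α 1))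
      (pF V₁⁻¹ V₂⁻¹ (μ₂ - μ₁) α₀ *
        ((1 - α₀) * ((1 - c) * gauss μ₂ V₂ (xvec V₁⁻¹ V₂⁻¹ μ₁ μ₂ α₀ 0, xvec V₁⁻¹ V₂⁻¹ μ₁ μ₂ α₀ 1)) -
          α₀ * (c * gauss μ₁ V₁ (xvec V₁⁻¹ V₂⁻¹ μ₁ μ₂ α₀ 0, xvec V₁⁻¹ V₂⁻¹ μ₁ μ₂ α₀ 1)))) α₀ := by
  have hF := ((hasDerivAt_f1_ridge (μ₁ := μ₁) (μ₂ := μ₂) h₁ h₂ hα).const_mul c).add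
    ((hasDerivAt_f2_ridge (μ₁ := μ₁) (μ₂ := μ₂) h₁ h₂ hα).const_mul (1 - c))
  have : (fun α => mix (gauss μ₁ V₁) (gauss μ₂ V₂) c
      (xvec V₁⁻¹ V₂⁻¹ μ₁ μ₂ α 0, xvec V₁⁻¹ V₂⁻¹ μ₁ μ₂ α 1)) =
      (fun α => c * gauss μ₁ V₁ (xvec V₁⁻¹ V₂⁻¹ μ₁ μ₂ α 0, xvec V₁⁻¹ V₂⁻¹ μ₁ μ₂ α 1) +
        (1 - c) * gauss μ₂ V₂ (xvec V₁⁻¹ V₂⁻¹ μ₁ μ₂ α 0, xvec V₁⁻¹ V₂⁻¹ μ₁ μ₂ α 1)) := rfl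
  rw [this]
  refine hF.congr_deriv ?_
  ring

lemma hasDerivAt_L_ridge (h₁ : V₁.PosDef) (h₂ : V₂.PosDef) {c : ℝ}
    (hc : c ∈ Set.Ioo (0:ℝ) 1) {α₀ : ℝ} (hα : α₀ ∈ Set.Ioo (0:ℝ) 1) :
    HasDerivAt (fun α => Real.log ((1 - α) * ((1 - c) * gauss μ₂ V₂
        (xvec V₁⁻¹ V₂⁻¹ μ₁ μ₂ α 0, xvec V₁⁻¹ V₂⁻¹ μ₁ μ₂ α 1))) -
      Real.log (α * (c * gauss μ₁ V₁ (xvec V₁⁻¹ V₂⁻¹ μ₁ μ₂ α 0, xvec V₁⁻¹ V₂⁻¹ μ₁ μ₂ α 1))))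
      (-(1 - α₀ * (1 - α₀) * pF V₁⁻¹ V₂⁻¹ (μ₂ - μ₁) α₀) / (α₀ * (1 - α₀))) α₀ := by
  have hα0 : (0:ℝ) < α₀ := hα.1
  have hα1 : α₀ < 1 := hα.2
  have hF1 : 0 < gauss μ₁ V₁ (xvec V₁⁻¹ V₂⁻¹ μ₁ μ₂ α₀ 0, xvec V₁⁻¹ V₂⁻¹ μ₁ μ₂ α₀ 1) :=
    gauss_pos μ₁ h₁.det_pos _
  have hF2 : 0 < gauss μ₂ V₂ (xvec V₁⁻¹ V₂⁻¹ μ₁ μ₂ α₀ 0, xvec V₁⁻¹ V₂⁻¹ μ₁ μ₂ α₀ 1) :=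
    gauss_pos μ₂ h₂.det_pos _
  have hc0 : (0:ℝ) < c := hc.1
  have hc1 : c < 1 := hc.2
  have hne2 : ((1 - α₀) * ((1 - c) * gauss μ₂ V₂
      (xvec V₁⁻¹ V₂⁻¹ μ₁ μ₂ α₀ 0, xvec V₁⁻¹ V₂⁻¹ μ₁ μ₂ α₀ 1)) ≠ 0) :=
    (mul_pos (by linarith) (mul_pos (by linarith) hF2)).ne'
  have hne1 : (α₀ * (c * gauss μ₁ V₁
      (xvec V₁⁻¹ V₂⁻¹ μ₁ μ₂ α₀ 0, xvec V₁⁻¹ V₂⁻¹ μ₁ μ₂ α₀ 1)) ≠ 0) :=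
    (mul_pos hα0 (mul_pos hc0 hF1)).ne'
  have t2 := (((hasDerivAt_id α₀).const_sub 1).mul
    ((hasDerivAt_f2_ridge (μ₁ := μ₁) (μ₂ := μ₂) h₁ h₂ hα).const_mul (1 - c))).log hne2
  have t1 := ((hasDerivAt_id α₀).mul
    ((hasDerivAt_f1_ridge (μ₁ := μ₁) (μ₂ := μ₂) h₁ h₂ hα).const_mul c)).log hne1
  have hL := t2.sub t1
  refine hL.congr_deriv (Eq.symm ?_)
  simp only [id_eq, Pi.mul_apply]
  have h10 : (1:ℝ) - α₀ ≠ 0 := by linarith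
  have h1c : (1:ℝ) - c ≠ 0 := by linarith
  set F1 := gauss μ₁ V₁ (xvec V₁⁻¹ V₂⁻¹ μ₁ μ₂ α₀ 0, xvec V₁⁻¹ V₂⁻¹ μ₁ μ₂ α₀ 1) with hF1d
  set F2 := gauss μ₂ V₂ (xvec V₁⁻¹ V₂⁻¹ μ₁ μ₂ α₀ 0, xvec V₁⁻¹ V₂⁻¹ μ₁ μ₂ α₀ 1) with hF2d
  set P := pF V₁⁻¹ V₂⁻¹ (μ₂ - μ₁) α₀ with hPd
  rw [div_sub_div _ _ hne2 hne1, div_eq_div_iff (mul_ne_zero hα0.ne' h10)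
    (mul_ne_zero hne2 hne1)]
  ring
end


lemma main_case {μ₁ μ₂ : Fin 2 → ℝ} {V₁ V₂ : Matrix (Fin 2) (Fin 2) ℝ}
    (h₁ : V₁.PosDef) (h₂ : V₂.PosDef) {q : ℝ → ℝ}
    (hq : ∀ α ∈ Set.Ioo (0:ℝ) 1, q α = 1 - α * (1 - α) * pF V₁⁻¹ V₂⁻¹ (μ₂ - μ₁) α)
    {Z : Set ℝ} (hZ : Z = {α ∈ Set.Icc (0:ℝ) 1 | q α = 0}) (hfin : Z.Finite)
    {c : ℝ} (hc : c ∈ Set.Ioo (0:ℝ) 1) (hmm : μ₂ - μ₁ ≠ 0) :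
    {z : ℝ × ℝ | IsLocalMax (mix (gauss μ₁ V₁) (gauss μ₂ V₂) c) z}.Finite ∧
      2 * {z : ℝ × ℝ | IsLocalMax (mix (gauss μ₁ V₁) (gauss μ₂ V₂) c) z}.ncard ≤ Z.ncard + 2 := by
  obtain ⟨hc0, hc1⟩ := hc
  have hA : (V₁⁻¹).PosDef := h₁.inv
  have hB : (V₂⁻¹).PosDef := h₂.inv
  set f₁ : ℝ × ℝ → ℝ := gauss μ₁ V₁ with hf₁def
  set f₂ : ℝ × ℝ → ℝ := gauss μ₂ V₂ with hf₂def
  set Mc : ℝ × ℝ → ℝ := mix f₁ f₂ c with hMcdef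
  have hf₁pos : ∀ z, 0 < f₁ z := fun z => gauss_pos μ₁ h₁.det_pos z
  have hf₂pos : ∀ z, 0 < f₂ z := fun z => gauss_pos μ₂ h₂.det_pos z
  have hMcpos : ∀ z, 0 < Mc z := fun z =>
    add_pos (mul_pos hc0 (hf₁pos z)) (mul_pos (by linarith : (0:ℝ) < 1 - c) (hf₂pos z))
  set xsp : ℝ → ℝ × ℝ := fun α => (xvec V₁⁻¹ V₂⁻¹ μ₁ μ₂ α 0, xvec V₁⁻¹ V₂⁻¹ μ₁ μ₂ α 1)
    with hxspdef
  set Δ : ℝ → ℝ := fun α => (1 - α) * ((1 - c) * f₂ (xsp α)) - α * (c * f₁ (xsp α)) with hΔdef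
  set L : ℝ → ℝ := fun α => Real.log ((1 - α) * ((1 - c) * f₂ (xsp α))) -
    Real.log (α * (c * f₁ (xsp α))) with hLdef
  set P : ℝ → ℝ := fun α => pF V₁⁻¹ V₂⁻¹ (μ₂ - μ₁) α with hPdef
  have hPpos : ∀ α ∈ Set.Ioo (0:ℝ) 1, 0 < P α := fun α hα =>
    pF_pos hA hB (Set.Ioo_subset_Icc_self hα) hmm
  have hLd : ∀ α ∈ Set.Ioo (0:ℝ) 1, HasDerivAt L (-(q α) / (α * (1 - α))) α := by
    intro α hα
    have h := hasDerivAt_L_ridge (μ₁ := μ₁) (μ₂ := μ₂) h₁ h₂ ⟨hc0, hc1⟩ hα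
    rw [← hq α hα] at h
    exact h
  have hΔd : ∀ α ∈ Set.Ioo (0:ℝ) 1, HasDerivAt (fun t => Mc (xsp t)) (P α * Δ α) α :=
    fun α hα => hasDerivAt_mix_ridge (μ₁ := μ₁) (μ₂ := μ₂) h₁ h₂ c hα
  have hΔcont : ∀ α ∈ Set.Ioo (0:ℝ) 1, ContinuousAt Δ α := fun α hα =>
    (hasDerivAt_Delta_ridge (μ₁ := μ₁) (μ₂ := μ₂) h₁ h₂ c hα).continuousAt
  have hxspcont : ∀ α ∈ Set.Ioo (0:ℝ) 1, ContinuousAt xsp α := by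
    intro α hα
    have h0 := (hasDerivAt_xvec (m1 := μ₁) (m2 := μ₂)
      (det_Smat_ne_nhds h₁ h₂ (Set.Ioo_subset_Icc_self hα)) 0).continuousAt
    have hh1 := (hasDerivAt_xvec (m1 := μ₁) (m2 := μ₂)
      (det_Smat_ne_nhds h₁ h₂ (Set.Ioo_subset_Icc_self hα)) 1).continuousAt
    exact h0.prodMk hh1
  set K : Set ℝ := {α | α ∈ Set.Ioo (0:ℝ) 1 ∧ Δ α = 0} with hKdef
  -- between any two elements of K lies a zero of q
  have hL0 : ∀ t ∈ K, L t = 0 := by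
    intro t ht
    have hd : (1 - t) * ((1 - c) * f₂ (xsp t)) - t * (c * f₁ (xsp t)) = 0 := ht.2
    have heq : (1 - t) * ((1 - c) * f₂ (xsp t)) = t * (c * f₁ (xsp t)) := by linarith
    show Real.log ((1 - t) * ((1 - c) * f₂ (xsp t))) - Real.log (t * (c * f₁ (xsp t))) = 0
    rw [heq, sub_self]
  have hKsub : ∀ a ∈ K, ∀ b ∈ K, a < b → ∃ z ∈ Z, a < z ∧ z < b := by
    intro a ha b hb hab
    have hcontL : ContinuousOn L (Set.Icc a b) := by
      intro t ht
      have htI : t ∈ Set.Ioo (0:ℝ) 1 := ⟨lt_of_lt_of_le ha.1.1 ht.1, lt_of_le_of_lt ht.2 hb.1.2⟩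
      exact ((hLd t htI).continuousAt).continuousWithinAt
    obtain ⟨β, hβmem, hβ⟩ := exists_deriv_eq_zero hab hcontL ((hL0 a ha).trans (hL0 b hb).symm)
    have hβI : β ∈ Set.Ioo (0:ℝ) 1 := ⟨lt_trans ha.1.1 hβmem.1, lt_trans hβmem.2 hb.1.2⟩
    have hd := (hLd β hβI).deriv
    rw [hβ] at hd
    have hne : β * (1 - β) ≠ 0 := mul_ne_zero hβI.1.ne' (by linarith [hβI.2] : (1:ℝ) - β ≠ 0)
    have hqβ : q β = 0 := by
      have := hd.symm
      rw [div_eq_zero_iff] at this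
      rcases this with h' | h'
      · linarith [h']
      · exact absurd h' hne
    refine ⟨β, ?_, hβmem.1, hβmem.2⟩
    rw [hZ]
    exact ⟨⟨le_of_lt hβI.1, le_of_lt hβI.2⟩, hqβ⟩
  obtain ⟨hKfin, hKcard⟩ := count_between hfin hKsub
  -- critical-point analysis
  have hcrit : ∀ z : ℝ × ℝ, IsLocalMax Mc z →
      (1 - c) * f₂ z / Mc z ∈ Set.Ioo (0:ℝ) 1 ∧ xsp ((1 - c) * f₂ z / Mc z) = z := by
    intro z hz
    have hMz := hMcpos z
    have hMc' : Mc z = c * f₁ z + (1 - c) * f₂ z := rfl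
    set t := (1 - c) * f₂ z / Mc z with htdef
    have ht0 : 0 < t := div_pos (mul_pos (by linarith) (hf₂pos z)) hMz
    have ht1 : t < 1 := by
      rw [htdef, div_lt_one hMz, hMc']
      nlinarith [mul_pos hc0 (hf₁pos z)]
    have h1t : 1 - t = c * f₁ z / Mc z := by
      rw [htdef]
      field_simp
      rw [hMc']
      ring
    have heq := mode_eqns h₁ h₂ hz
    have hSz : Smat V₁⁻¹ V₂⁻¹ t *ᵥ ![z.1, z.2] = bvec V₁⁻¹ V₂⁻¹ μ₁ μ₂ t := by
      funext i
      have hzv1 : (![z.1, z.2] - μ₁) = ![z.1 - μ₁ 0, z.2 - μ₁ 1] := by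
        funext j; fin_cases j <;> simp
      have hzv2 : (![z.1, z.2] - μ₂) = ![z.1 - μ₂ 0, z.2 - μ₂ 1] := by
        funext j; fin_cases j <;> simp
      have hi := heq i
      have key : (Smat V₁⁻¹ V₂⁻¹ t *ᵥ ![z.1, z.2]) i - bvec V₁⁻¹ V₂⁻¹ μ₁ μ₂ t i =
          (1 - t) * ((V₁⁻¹ *ᵥ (![z.1, z.2] - μ₁)) i) +
            t * ((V₂⁻¹ *ᵥ (![z.1, z.2] - μ₂)) i) := by
        simp only [Smat, bvec, Matrix.add_mulVec, Matrix.smul_mulVec, Matrix.mulVec_sub,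
          Pi.add_apply, Pi.smul_apply, Pi.sub_apply, smul_eq_mul]
        ring
      rw [hzv1, hzv2] at key
      have hzero : (1 - t) * ((V₁⁻¹ *ᵥ ![z.1 - μ₁ 0, z.2 - μ₁ 1]) i) +
          t * ((V₂⁻¹ *ᵥ ![z.1 - μ₂ 0, z.2 - μ₂ 1]) i) = 0 := by
        rw [h1t, htdef]
        rw [div_mul_eq_mul_div, div_mul_eq_mul_div, ← add_div, div_eq_zero_iff]
        left
        linarith [hi]
      linarith [key, hzero]
    have htI : t ∈ Set.Icc (0:ℝ) 1 := ⟨le_of_lt ht0, le_of_lt ht1⟩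
    have hxz : xvec V₁⁻¹ V₂⁻¹ μ₁ μ₂ t = ![z.1, z.2] := by
      calc xvec V₁⁻¹ V₂⁻¹ μ₁ μ₂ t = (Smat V₁⁻¹ V₂⁻¹ t)⁻¹ *ᵥ bvec V₁⁻¹ V₂⁻¹ μ₁ μ₂ t := rfl
        _ = (Smat V₁⁻¹ V₂⁻¹ t)⁻¹ *ᵥ (Smat V₁⁻¹ V₂⁻¹ t *ᵥ ![z.1, z.2]) := by rw [hSz]
        _ = ![z.1, z.2] := by
            rw [Matrix.mulVec_mulVec, Matrix.nonsing_inv_mul _ (Smat_unit hA hB htI),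
              Matrix.one_mulVec]
    refine ⟨⟨ht0, ht1⟩, ?_⟩
    show (xvec V₁⁻¹ V₂⁻¹ μ₁ μ₂ t 0, xvec V₁⁻¹ V₂⁻¹ μ₁ μ₂ t 1) = z
    rw [hxz]
    simp
  have hcritK : ∀ z : ℝ × ℝ, IsLocalMax Mc z → (1 - c) * f₂ z / Mc z ∈ K := by
    intro z hz
    obtain ⟨htI, hxz⟩ := hcrit z hz
    refine ⟨htI, ?_⟩
    have hMz := hMcpos z
    have hMc' : Mc z = c * f₁ z + (1 - c) * f₂ z := rfl
    have h1t : 1 - (1 - c) * f₂ z / Mc z = c * f₁ z / Mc z := by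
      field_simp
      rw [hMc']
      ring
    show (1 - (1 - c) * f₂ z / Mc z) * ((1 - c) * f₂ (xsp ((1 - c) * f₂ z / Mc z))) -
      ((1 - c) * f₂ z / Mc z) * (c * f₁ (xsp ((1 - c) * f₂ z / Mc z))) = 0
    rw [hxz, h1t]
    field_simp
    ring
  set Kmax : Set ℝ := {α | α ∈ K ∧ IsLocalMax Mc (xsp α)} with hKmaxdef
  have hKmaxsub : Kmax ⊆ K := fun t ht => ht.1
  have hKmaxfin : Kmax.Finite := hKfin.subset hKmaxsub
  -- alternation
  have halt : ∀ a ∈ Kmax, ∀ b ∈ Kmax, a < b → ∃ t ∈ K \ Kmax, a < t ∧ t < b := by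
    intro a ha b hb hab
    by_contra hcon
    push_neg at hcon
    have hbetween : ∀ t, t ∈ K → a < t → t < b → t ∈ Kmax := by
      intro t htK hat htb
      by_contra htm
      exact absurd htb (not_lt.2 (hcon t ⟨htK, htm⟩ hat))
    have hTfin : {t | t ∈ K ∧ a < t ∧ t < b}.Finite := hKfin.subset (fun t ht => ht.1)
    have hβex : ∃ β, β ∈ Kmax ∧ a < β ∧ β ≤ b ∧ ∀ t ∈ Set.Ioo a β, t ∉ K := by
      rcases Set.eq_empty_or_nonempty {t | t ∈ K ∧ a < t ∧ t < b} with hT | hT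
      · refine ⟨b, hb, hab, le_refl b, fun t ht htK => ?_⟩
        exact (Set.eq_empty_iff_forall_notMem.1 hT t) ⟨htK, ht.1, lt_of_lt_of_le ht.2 (le_refl b)⟩
      · have hne : hTfin.toFinset.Nonempty := by rwa [Set.Finite.toFinset_nonempty]
        set β := hTfin.toFinset.min' hne with hβdef
        have hβT : β ∈ {t | t ∈ K ∧ a < t ∧ t < b} := by
          have := hTfin.toFinset.min'_mem hne
          rwa [Set.Finite.mem_toFinset] at this
        refine ⟨β, hbetween β hβT.1 hβT.2.1 hβT.2.2, hβT.2.1, le_of_lt hβT.2.2, ?_⟩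
        intro s hs hsK
        have hsT : s ∈ {t | t ∈ K ∧ a < t ∧ t < b} := ⟨hsK, hs.1, lt_trans hs.2 hβT.2.2⟩
        have := hTfin.toFinset.min'_le s (hTfin.mem_toFinset.2 hsT)
        exact absurd this (not_le.2 hs.2)
    obtain ⟨β, hβKmax, haβ, hβb, hIooK⟩ := hβex
    have haI : a ∈ Set.Ioo (0:ℝ) 1 := ha.1.1
    have hβI : β ∈ Set.Ioo (0:ℝ) 1 := hβKmax.1.1
    have hsubI : Set.Ioo a β ⊆ Set.Ioo (0:ℝ) 1 := fun s hs =>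
      ⟨lt_trans haI.1 hs.1, lt_trans hs.2 hβI.2⟩
    have hΔne : ∀ s ∈ Set.Ioo a β, Δ s ≠ 0 := fun s hs hΔ0 => hIooK s hs ⟨hsubI hs, hΔ0⟩
    have hlocmax : ∀ γ, γ ∈ Set.Ioo (0:ℝ) 1 → IsLocalMax Mc (xsp γ) →
        IsLocalMax (fun s => Mc (xsp s)) γ := by
      intro γ hγ hmax
      exact (hxspcont γ hγ).eventually hmax
    have hhcont : ContinuousOn (fun s => Mc (xsp s)) (Set.Icc a β) := by
      intro s hs
      have hsI : s ∈ Set.Ioo (0:ℝ) 1 := ⟨lt_of_lt_of_le haI.1 hs.1, lt_of_le_of_lt hs.2 hβI.2⟩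
      exact ((hΔd s hsI).continuousAt).continuousWithinAt
    have hcases : (∀ s ∈ Set.Ioo a β, 0 < Δ s) ∨ (∀ s ∈ Set.Ioo a β, Δ s < 0) := by
      have hmid : (a + β)/2 ∈ Set.Ioo a β := ⟨by linarith, by linarith⟩
      have hcontΔ : ∀ x ∈ Set.Ioo a β, ContinuousAt Δ x := fun x hx => hΔcont x (hsubI hx)
      rcases lt_or_gt_of_ne (hΔne _ hmid) with hneg | hpos
      · right; intro s hs
        by_contra hge
        have hgt : 0 < Δ s := lt_of_le_of_ne (not_lt.1 hge) (Ne.symm (hΔne s hs))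
        have := sign_const hcontΔ hΔne hs hmid hgt
        linarith
      · left; intro s hs; exact sign_const hcontΔ hΔne hmid hs hpos
    rcases hcases with hpos | hneg
    · have hmono : StrictMonoOn (fun s => Mc (xsp s)) (Set.Icc a β) := by
        apply strictMonoOn_of_deriv_pos (convex_Icc a β) hhcont
        intro s hs
        rw [interior_Icc] at hs
        have hsI := hsubI hs
        rw [(hΔd s hsI).deriv]
        exact mul_pos (hPpos s hsI) (hpos s hs)
      have hmaxa : IsLocalMax (fun s => Mc (xsp s)) a := hlocmax a haI ha.2
      have hev : ∀ᶠ s in nhdsWithin a (Set.Ioi a), Mc (xsp s) ≤ Mc (xsp a) :=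
        hmaxa.filter_mono nhdsWithin_le_nhds
      have hev2 : ∀ᶠ s in nhdsWithin a (Set.Ioi a), s ∈ Set.Ioo a β :=
        Filter.eventually_of_mem (Ioo_mem_nhdsGT haβ) (fun s hs => hs)
      obtain ⟨s, hs1, hs2⟩ := (hev.and hev2).exists
      have := hmono (Set.left_mem_Icc.2 (le_of_lt haβ)) ⟨le_of_lt hs2.1, le_of_lt hs2.2⟩ hs2.1
      linarith
    · have hmono : StrictAntiOn (fun s => Mc (xsp s)) (Set.Icc a β) := by
        apply strictAntiOn_of_deriv_neg (convex_Icc a β) hhcont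
        intro s hs
        rw [interior_Icc] at hs
        have hsI := hsubI hs
        rw [(hΔd s hsI).deriv]
        exact mul_neg_of_pos_of_neg (hPpos s hsI) (hneg s hs)
      have hmaxβ : IsLocalMax (fun s => Mc (xsp s)) β := hlocmax β hβI hβKmax.2
      have hev : ∀ᶠ s in nhdsWithin β (Set.Iio β), Mc (xsp s) ≤ Mc (xsp β) :=
        hmaxβ.filter_mono nhdsWithin_le_nhds
      have hev2 : ∀ᶠ s in nhdsWithin β (Set.Iio β), s ∈ Set.Ioo a β :=
        Filter.eventually_of_mem (Ioo_mem_nhdsLT haβ) (fun s hs => hs)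
      obtain ⟨s, hs1, hs2⟩ := (hev.and hev2).exists
      have := hmono ⟨le_of_lt hs2.1, le_of_lt hs2.2⟩ (Set.right_mem_Icc.2 (le_of_lt haβ)) hs2.2
      linarith
  obtain ⟨-, hKmcard⟩ := count_between (hKfin.sdiff (t := Kmax)) halt
  have hcard2 : (K \ Kmax).ncard + Kmax.ncard = K.ncard :=
    Set.ncard_diff_add_ncard_of_subset hKmaxsub hKfin
  -- modes inject into Kmax
  have hmap : ∀ z ∈ {z : ℝ × ℝ | IsLocalMax Mc z}, (1 - c) * f₂ z / Mc z ∈ Kmax := by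
    intro z hz
    refine ⟨hcritK z hz, ?_⟩
    rw [(hcrit z hz).2]
    exact hz
  have hinj : Set.InjOn (fun z => (1 - c) * f₂ z / Mc z) {z : ℝ × ℝ | IsLocalMax Mc z} := by
    intro z hz z' hz' hE
    have hx1 := (hcrit z hz).2
    have hx2 := (hcrit z' hz').2
    have hE' : (1 - c) * f₂ z / Mc z = (1 - c) * f₂ z' / Mc z' := hE
    rw [← hx1, ← hx2, hE']
  have hmodesfin : {z : ℝ × ℝ | IsLocalMax Mc z}.Finite :=
    Set.Finite.of_finite_image (hKmaxfin.subset (Set.image_subset_iff.2 hmap)) hinj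
  have hmodescard : {z : ℝ × ℝ | IsLocalMax Mc z}.ncard ≤ Kmax.ncard :=
    Set.ncard_le_ncard_of_injOn _ hmap hinj hKmaxfin
  refine ⟨hmodesfin, ?_⟩
  omega


lemma point_eq {z : ℝ × ℝ} {μ : Fin 2 → ℝ} {M : Matrix (Fin 2) (Fin 2) ℝ}
    (hM : IsUnit M.det) (h : ∀ i, (M *ᵥ ![z.1 - μ 0, z.2 - μ 1]) i = 0) :
    z ∈ ({((μ 0 : ℝ), (μ 1 : ℝ))} : Set (ℝ × ℝ)) := by
  have hvec : M *ᵥ ![z.1 - μ 0, z.2 - μ 1] = 0 := funext h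
  have hdv : ![z.1 - μ 0, z.2 - μ 1] = (0 : Fin 2 → ℝ) := by
    by_contra hne
    exact mulVec_ne_zero hM hne hvec
  have h0 := congrFun hdv 0
  have h1 := congrFun hdv 1
  simp only [Matrix.cons_val_zero, Matrix.cons_val_one, Matrix.head_cons, Pi.zero_apply] at h0 h1
  have hz : z = ((μ 0 : ℝ), (μ 1 : ℝ)) := Prod.ext (by linarith) (by linarith)
  simp [hz]

lemma bound_of_subset_singleton {S : Set (ℝ × ℝ)} {pt : ℝ × ℝ} (h : S ⊆ {pt}) (n : ℕ) :
    S.Finite ∧ (S.ncard : ℝ) ≤ (n : ℝ) / 2 + 1 := by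
  refine ⟨(Set.finite_singleton pt).subset h, ?_⟩
  have h1 : S.ncard ≤ 1 := by
    have := Set.ncard_le_ncard h (Set.finite_singleton pt)
    simpa using this
  have h2 : (S.ncard : ℝ) ≤ 1 := by exact_mod_cast h1
  have hn : (0 : ℝ) ≤ (n : ℝ) := Nat.cast_nonneg n
  linarith

theorem stmt_17 (μ₁ μ₂ : Fin 2 → ℝ) (V₁ V₂ : Matrix (Fin 2) (Fin 2) ℝ)
    (h₁ : V₁.PosDef) (h₂ : V₂.PosDef)
    (Sa : ℝ → Matrix (Fin 2) (Fin 2) ℝ) (hSa : ∀ α, Sa α = (1 - α) • V₁⁻¹ + α • V₂⁻¹)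
    (p : ℝ → ℝ) (hp : ∀ α, p α = dotProduct (μ₂ - μ₁)
      ((V₁⁻¹ * (Sa α)⁻¹ * V₂⁻¹ * (Sa α)⁻¹ * V₂⁻¹ * (Sa α)⁻¹ * V₁⁻¹) *ᵥ (μ₂ - μ₁)))
    (q : ℝ → ℝ) (hq : ∀ α, q α = 1 - α * (1 - α) * p α)
    (n : ℕ) (hfin : {α ∈ Set.Icc (0 : ℝ) 1 | q α = 0}.Finite)
    (hn : {α ∈ Set.Icc (0 : ℝ) 1 | q α = 0}.ncard = n)
    (c : ℝ) (hc : c ∈ Set.Icc (0 : ℝ) 1) :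
    {z : ℝ × ℝ | IsLocalMax (mix (gauss μ₁ V₁) (gauss μ₂ V₂) c) z}.Finite ∧
      ({z : ℝ × ℝ | IsLocalMax (mix (gauss μ₁ V₁) (gauss μ₂ V₂) c) z}.ncard : ℝ)
        ≤ (n : ℝ) / 2 + 1 := by
  rcases eq_or_lt_of_le hc.1 with hc0 | hc0
  · -- c = 0 : single gaussian f₂
    apply bound_of_subset_singleton (pt := ((μ₂ 0 : ℝ), (μ₂ 1 : ℝ)))
    intro z hz
    have heq := mode_eqns h₁ h₂ hz
    have hw : ∀ i, (V₂⁻¹ *ᵥ ![z.1 - μ₂ 0, z.2 - μ₂ 1]) i = 0 := by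
      intro i
      have hi := heq i
      rw [← hc0] at hi
      have hf := gauss_pos μ₂ h₂.det_pos z
      have h' : gauss μ₂ V₂ z * (V₂⁻¹ *ᵥ ![z.1 - μ₂ 0, z.2 - μ₂ 1]) i = 0 := by linarith [hi]
      rcases mul_eq_zero.1 h' with h'' | h''
      · exact absurd h'' hf.ne'
      · exact h''
    exact point_eq (isUnit_iff_ne_zero.2 h₂.inv.det_pos.ne') hw
  rcases eq_or_lt_of_le hc.2 with hc1 | hc1
  · -- c = 1 : single gaussian f₁
    apply bound_of_subset_singleton (pt := ((μ₁ 0 : ℝ), (μ₁ 1 : ℝ)))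
    intro z hz
    have heq := mode_eqns h₁ h₂ hz
    have hw : ∀ i, (V₁⁻¹ *ᵥ ![z.1 - μ₁ 0, z.2 - μ₁ 1]) i = 0 := by
      intro i
      have hi := heq i
      rw [hc1] at hi
      have hf := gauss_pos μ₁ h₁.det_pos z
      have h' : gauss μ₁ V₁ z * (V₁⁻¹ *ᵥ ![z.1 - μ₁ 0, z.2 - μ₁ 1]) i = 0 := by linarith [hi]
      rcases mul_eq_zero.1 h' with h'' | h''
      · exact absurd h'' hf.ne'
      · exact h''
    exact point_eq (isUnit_iff_ne_zero.2 h₁.inv.det_pos.ne') hw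
  by_cases hmm : μ₂ - μ₁ = 0
  · -- equal means
    have hμeq : μ₂ = μ₁ := sub_eq_zero.1 hmm
    apply bound_of_subset_singleton (pt := ((μ₁ 0 : ℝ), (μ₁ 1 : ℝ)))
    intro z hz
    have heq := mode_eqns h₁ h₂ hz
    rw [hμeq] at heq
    have hf₁ := gauss_pos μ₁ h₁.det_pos z
    have hf₂ := gauss_pos μ₁ h₂.det_pos z
    set N : Matrix (Fin 2) (Fin 2) ℝ :=
      (c * gauss μ₁ V₁ z) • V₁⁻¹ + ((1 - c) * gauss μ₁ V₂ z) • V₂⁻¹ with hNdef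
    have hN : N.PosDef := (posDef_smul h₁.inv (mul_pos hc0 hf₁)).add
      (posDef_smul h₂.inv (mul_pos (by linarith) hf₂))
    have hw : ∀ i, (N *ᵥ ![z.1 - μ₁ 0, z.2 - μ₁ 1]) i = 0 := by
      intro i
      have hi := heq i
      simp only [hNdef, Matrix.add_mulVec, Matrix.smul_mulVec, Pi.add_apply,
        Pi.smul_apply, smul_eq_mul]
      linarith [hi]
    exact point_eq (isUnit_iff_ne_zero.2 hN.det_pos.ne') hw
  · -- main case
    have hq' : ∀ α ∈ Set.Ioo (0:ℝ) 1, q α = 1 - α * (1 - α) * pF V₁⁻¹ V₂⁻¹ (μ₂ - μ₁) α := by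
      intro α hα
      rw [hq α, hp α, hSa α]
      rw [show ((1 - α) • V₁⁻¹ + α • V₂⁻¹ : Matrix (Fin 2) (Fin 2) ℝ) = Smat V₁⁻¹ V₂⁻¹ α from rfl]
      rw [pF_eq h₁.inv h₂.inv (Set.Ioo_subset_Icc_self hα) (μ₂ - μ₁)]
    obtain ⟨hfin', hcard'⟩ := main_case h₁ h₂ hq' rfl hfin ⟨hc0, hc1⟩ hmm
    refine ⟨hfin', ?_⟩
    rw [hn] at hcard'
    have h2 : (2 * {z : ℝ × ℝ | IsLocalMax (mix (gauss μ₁ V₁) (gauss μ₂ V₂) c) z}.ncard : ℝ)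
        ≤ (n : ℝ) + 2 := by exact_mod_cast hcard'
    push_cast at h2 ⊢
    linarith
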